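/- For every integer n ≥ 1, every sequence of coefficients c : ℕ → ℂ, and every real R > 1/|f|: -(2πi)^{-1} ∮_{|t|=R} (-Log(1 + 1/(f t)))·( c_0/(t(f t+1)) + Σ_{b=1}^{n} c_b·(φ_{b-1})'(t) ) dt = c_1/(f(f+1)), where (φ_{b-1})' is the formal derivative of the polynomial φ_{b-1} evaluated at t. That is, the sum of residues Σ_{b=0}^{n} c_b · Res_{t=∞}(φ_{-1} dφ_{b-1}) collapses onto the b = 1 term and equals c_1/(f(f+1)). -/

import Mathlib

/-!
Write `L t = -Log (1 + 1 / (f t))`, so that `L' t = (t (f t + 1))⁻¹`, and `v = ∑ c_b φ_{b-1}`.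
The integrand `L (c₀ L' + v')` differs from the derivative of `L (c₀ L / 2 + v)` by `-L' v`,
so the integral is `-∮ L' v`. The partial fractions `L' t = t⁻¹ - (t + f⁻¹)⁻¹` and Cauchy's
formula turn this into `-2πi (v 0 - v (-f⁻¹))`. For `b ≥ 2`, `φ_{b-1} = D φ_{b-2}` carries the
factor `t (f t + 1)` and vanishes at both poles, so only `c₁ φ₀` contributes, with
`φ₀ 0 - φ₀ (-f⁻¹) = (f (f + 1))⁻¹`.
-/

open Polynomial Metric Complex Real

lemma mul_mul_add_one_ne_zero_of_one_lt_norm_mul {f t : ℂ} (ht : 1 < ‖f * t‖) :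
    t * (f * t + 1) ≠ 0 := by
  have hft : f * t ≠ 0 := norm_pos_iff.mp (one_pos.trans ht)
  refine mul_ne_zero (right_ne_zero_of_mul hft) fun h => ht.ne' ?_
  rw [eq_neg_of_add_eq_zero_left h, norm_neg, norm_one]

lemma hasDerivAt_neg_log_one_add_one_div_mul {f t : ℂ} (ht : 1 < ‖f * t‖) :
    HasDerivAt (fun t => -log (1 + 1 / (f * t))) (t * (f * t + 1))⁻¹ t := by
  have hft : f * t ≠ 0 := norm_pos_iff.mp (one_pos.trans ht)
  have hslit : 1 + 1 / (f * t) ∈ slitPlane := mem_slitPlane_of_norm_lt_one <| by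
    rwa [norm_div, norm_one, div_lt_one (one_pos.trans ht)]
  have hinner : HasDerivAt (fun t => 1 + 1 / (f * t)) (-f / (f * t) ^ 2) t := by
    simpa [one_div] using (((hasDerivAt_id t).const_mul f).inv hft).const_add 1
  refine ((hasDerivAt_log hslit).comp t hinner).neg.congr_deriv ?_
  have hf0 := left_ne_zero_of_mul hft
  have ht0 := right_ne_zero_of_mul hft
  field_simp

/-- Integration by parts on a circle: `u * (a * u' + v') + u' * v` is the derivative of
`u * (a / 2 * u + v)`. -/
theorem circleIntegral_mul_add_deriv_eq_neg {u u' v v' : ℂ → ℂ} {c : ℂ} {R : ℝ} (a : ℂ)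
    (hu : ∀ z ∈ sphere c |R|, HasDerivAt u (u' z) z)
    (hv : ∀ z ∈ sphere c |R|, HasDerivAt v (v' z) z)
    (hu' : ContinuousOn u' (sphere c |R|)) (hv' : ContinuousOn v' (sphere c |R|)) :
    ∮ z in C(c, R), u z * (a * u' z + v' z) = -∮ z in C(c, R), u' z * v z := by
  have hexact : ∮ z in C(c, R), (u z * (a * u' z + v' z) + u' z * v z) = 0 :=
    circleIntegral.integral_eq_zero_of_hasDerivWithinAt' fun z hz =>
      ((hu z hz).fun_mul (((hu z hz).const_mul (a / 2)).fun_add (hv z hz))).hasDerivWithinAt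
        |>.congr_deriv (by ring)
  have hu_cont : ContinuousOn u (sphere c |R|) := fun z hz =>
    (hu z hz).continuousAt.continuousWithinAt
  have hv_cont : ContinuousOn v (sphere c |R|) := fun z hz =>
    (hv z hz).continuousAt.continuousWithinAt
  rw [circleIntegral.integral_add
    (hu_cont.fun_mul ((continuousOn_const.fun_mul hu').fun_add hv')).circleIntegrable'
    (hu'.fun_mul hv_cont).circleIntegrable'] at hexact
  exact eq_neg_of_add_eq_zero_left hexact

theorem circleIntegral_inv_mul_mul_add_one_mul {f : ℂ} {R : ℝ} {g : ℂ → ℂ} (hf : f ≠ 0)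
    (hR : 1 / ‖f‖ < R) (hg : DifferentiableOn ℂ g (closedBall 0 R)) :
    ∮ z in C(0, R), (z * (f * z + 1))⁻¹ * g z = 2 * π * I * (g 0 - g (-f⁻¹)) := by
  have hR0 : 0 < R := (by positivity : 0 < 1 / ‖f‖).trans hR
  have h0 : (0 : ℂ) ∈ ball 0 R := mem_ball_self hR0
  have hpole : -f⁻¹ ∈ ball 0 R := by simpa [one_div] using hR
  have hne : ∀ w ∈ ball (0 : ℂ) R, ∀ z ∈ sphere (0 : ℂ) R, z - w ≠ 0 := fun w hw z hz =>
    sub_ne_zero.2 fun h => (sphere_disjoint_ball).ne_of_mem hz hw h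
  have hcont : ∀ w ∈ ball (0 : ℂ) R, CircleIntegrable (fun z => (z - w)⁻¹ • g z) 0 R :=
    fun w hw => (((continuousOn_id.sub continuousOn_const).inv₀ (hne w hw)).smul
      (hg.continuousOn.mono sphere_subset_closedBall)).circleIntegrable hR0.le
  have hpf : Set.EqOn (fun z => (z * (f * z + 1))⁻¹ * g z)
      (fun z => (z - 0)⁻¹ • g z - (z - -f⁻¹)⁻¹ • g z) (sphere 0 R) := fun z hz => by
    have h1 := hne 0 h0 z hz
    have h2 := hne _ hpole z hz
    simp only [smul_eq_mul, sub_zero, sub_neg_eq_add] at h1 h2 ⊢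
    have h3 : f * z + 1 ≠ 0 := by
      contrapose! h2
      field_simp
      linear_combination h2
    rw [← sub_mul, inv_sub_inv h1 h2]
    field_simp
    ring
  rw [circleIntegral.integral_congr hR0.le hpf, circleIntegral.integral_sub (hcont 0 h0)
    (hcont _ hpole), hg.circleIntegral_sub_inv_smul h0, hg.circleIntegral_sub_inv_smul hpole]
  simp only [smul_eq_mul]
  ring

theorem residue_sum_collapses_general (f : ℂ) (hf : f ≠ 0)
    (D : Polynomial ℂ → Polynomial ℂ)
    (hD : ∀ p, D p = C ((f + 1)⁻¹) * (X * (X - 1) * (C f * X + 1)) * p.derivative)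
    (φ : ℕ → Polynomial ℂ)
    (hφ0 : φ 0 = C ((f + 1)⁻¹) * (X - 1))
    (hφ : ∀ b, φ (b + 1) = D (φ b)) :
    ∀ n : ℕ, 1 ≤ n → ∀ c : ℕ → ℂ, ∀ R : ℝ, 1 / ‖f‖ < R →
      -(2 * Real.pi * Complex.I)⁻¹ *
        (∮ t in C(0, R), (-Complex.log (1 + 1 / (f * t))) *
          (c 0 * (t * (f * t + 1))⁻¹ +
            ∑ b ∈ Finset.Icc 1 n, c b * ((φ (b - 1)).derivative.eval t))) =
      c 1 / (f * (f + 1)) := by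
  intro n hn c R hR
  set v : ℂ → ℂ := fun t => ∑ b ∈ Finset.Icc 1 n, c b * (φ (b - 1)).eval t
  have hv_pole : ∀ w, w * (f * w + 1) = 0 → v w = c 1 * (φ 0).eval w := fun w hw =>
    Finset.sum_eq_single_of_mem 1 (by simp [hn]) fun b hb hb1 => by
      rw [show b - 1 = b - 2 + 1 by grind, hφ, hD]
      simp only [eval_mul, eval_C, eval_sub, eval_add, eval_X, eval_one]
      linear_combination (c b * (f + 1)⁻¹ * (w - 1) * (φ (b - 2)).derivative.eval w) * hw
  have hsphere : ∀ t ∈ sphere (0 : ℂ) |R|, 1 < ‖f * t‖ := fun t ht => by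
    rw [norm_mul, mem_sphere_zero_iff_norm.1 ht]
    calc 1 < ‖f‖ * R := (div_lt_iff₀' (norm_pos_iff.2 hf)).1 hR
      _ ≤ ‖f‖ * |R| := by gcongr; exact le_abs_self R
  have hparts := circleIntegral_mul_add_deriv_eq_neg (c := 0) (R := R) (v := v) (c 0)
    (fun t ht => hasDerivAt_neg_log_one_add_one_div_mul (hsphere t ht))
    (fun t _ => HasDerivAt.fun_sum fun b _ => ((φ (b - 1)).hasDerivAt t).const_mul (c b))
    (ContinuousOn.inv₀ (by fun_prop) fun t ht =>
      mul_mul_add_one_ne_zero_of_one_lt_norm_mul (hsphere t ht))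
    (continuousOn_finsetSum _ fun b _ => by fun_prop)
  rw [hparts, circleIntegral_inv_mul_mul_add_one_mul hf hR (by fun_prop),
    hv_pole 0 (by simp), hv_pole (-f⁻¹) (by field_simp; ring), hφ0]
  simp only [eval_mul, eval_C, eval_sub, eval_X, eval_one]
  field_simp
  ring

/-- For `n ≥ 1`, coefficients `c : ℕ → ℂ`, and `R > 1/|f|`:
`-(2πi)⁻¹ ∮_{|t|=R} (-Log(1 + 1/(ft)))·(c_0/(t(ft+1)) + Σ_{b=1}^n c_b φ_{b-1}'(t)) dt
 = c_1/(f(f+1))`, i.e. the sum of residues `Σ_{b=0}^n c_b Res_{t=∞}(φ_{-1} dφ_{b-1})`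
collapses onto the `b = 1` term. -/
theorem residue_sum_collapses (f : ℂ) (hf : f ≠ 0) (hf1 : f ≠ -1)
    (D : Polynomial ℂ → Polynomial ℂ)
    (hD : ∀ p, D p = C ((f + 1)⁻¹) * (X * (X - 1) * (C f * X + 1)) * p.derivative)
    (φ : ℕ → Polynomial ℂ)
    (hφ0 : φ 0 = C ((f + 1)⁻¹) * (X - 1))
    (hφ : ∀ b, φ (b + 1) = D (φ b)) :
    ∀ n : ℕ, 1 ≤ n → ∀ c : ℕ → ℂ, ∀ R : ℝ, 1 / ‖f‖ < R →
      -(2 * Real.pi * Complex.I)⁻¹ *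
        (∮ t in C(0, R), (-Complex.log (1 + 1 / (f * t))) *
          (c 0 * (t * (f * t + 1))⁻¹ +
            ∑ b ∈ Finset.Icc 1 n, c b * ((φ (b - 1)).derivative.eval t))) =
      c 1 / (f * (f + 1)) :=
  residue_sum_collapses_general f hf D hD φ hφ0 hφ
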